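/- arXiv:0911.0507 — 3 statements merged into one kernel-verified Lean document; each statement's English description precedes it below -/
import Mathlib

section
/- Let φ : [0,T] → ℝ be continuous with φ(s) > s for all s ∈ [0,T]. Define t_0 = T and, recursively, t_i = min{t ∈ [0,T] : φ(s) ≥ t_{i-1} for all s ∈ [t,T]} as long as t_{i-1} > 0. Then there exists a finite N such that t_N = 0, and [0,T] = [t_N, t_{N-1}] ∪ [t_{N-1}, t_{N-2}] ∪ ⋯ ∪ [t_1, t_0]. -/
open Set

theorem partition_reaches_zero
    (T : ℝ) (hT : 0 < T) (φ : ℝ → ℝ)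
    (hφc : ContinuousOn φ (Icc 0 T))
    (hφ : ∀ s ∈ Icc 0 T, s < φ s)
    (t : ℕ → ℝ) (ht0 : t 0 = T)
    (hrec : ∀ i, 0 < t i →
      IsLeast {x ∈ Icc 0 T | ∀ s ∈ Icc x T, t i ≤ φ s} (t (i + 1))) :
    ∃ N : ℕ, t N = 0 ∧ Icc (0 : ℝ) T = ⋃ i ∈ Finset.range N, Icc (t (i + 1)) (t i) := by
  -- uniform gap ε
  obtain ⟨ε, hε, hεle⟩ : ∃ ε > 0, ∀ s ∈ Icc (0:ℝ) T, s + ε ≤ φ s := by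
    have hc : ContinuousOn (fun s => φ s - s) (Icc 0 T) := hφc.sub continuousOn_id
    obtain ⟨a, ha, hmin⟩ :=
      isCompact_Icc.exists_isMinOn ⟨0, le_refl (0:ℝ), hT.le⟩ hc
    exact ⟨φ a - a, sub_pos.2 (hφ a ha), fun s hs => by
      have := hmin hs; simp only [mem_setOf_eq] at this; linarith⟩
  have hmem : ∀ i, 0 < t i → t (i+1) ∈ Icc (0:ℝ) T := fun i hi => (hrec i hi).1.1
  -- existence of N with t N = 0
  have hex : ∃ N, t N = 0 := by
    by_contra h
    push_neg at h
    have hpos : ∀ i, 0 < t i := by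
      intro i
      induction i with
      | zero => rw [ht0]; exact hT
      | succ n ih => exact lt_of_le_of_ne (hmem n ih).1 (Ne.symm (h _))
    have hbound : ∀ i, t i ≤ T - i * ε := by
      intro i
      induction i with
      | zero => simp [ht0]
      | succ n ih =>
        have hnT : t n ≤ T := le_trans ih (by nlinarith [Nat.cast_nonneg (α := ℝ) n])
        have hx : max (t n - ε) 0 ∈ {x ∈ Icc (0:ℝ) T | ∀ s ∈ Icc x T, t n ≤ φ s} := by
          refine ⟨⟨le_max_right _ _, max_le (by linarith) hT.le⟩, fun s hs => ?_⟩
          have h0s : (0:ℝ) ≤ s := le_trans (le_max_right _ _) hs.1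
          have h1 : t n - ε ≤ s := le_trans (le_max_left _ _) hs.1
          have := hεle s ⟨h0s, hs.2⟩
          linarith
        have h2 : t (n+1) ≤ max (t n - ε) 0 := (hrec n (hpos n)).2 hx
        have h3 : (0:ℝ) < max (t n - ε) 0 := lt_of_lt_of_le (hpos (n+1)) h2
        have h4 : max (t n - ε) 0 = t n - ε := by
          rcases max_cases (t n - ε) (0:ℝ) with ⟨he, _⟩ | ⟨he, _⟩
          · exact he
          · rw [he] at h3; exact absurd h3 (lt_irrefl 0)
        rw [h4] at h2
        push_cast
        linarith
    obtain ⟨n, hn⟩ := exists_nat_gt (T / ε)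
    have : T < n * ε := by
      rw [div_lt_iff₀ hε] at hn; linarith
    have := hbound n
    have := hpos n
    linarith
  set N := Nat.find hex with hNdef
  have htN : t N = 0 := Nat.find_spec hex
  have hN0 : 0 < N := by
    rcases Nat.eq_zero_or_pos N with h | h
    · rw [h] at htN; rw [ht0] at htN; linarith
    · exact h
  have hposN : ∀ i, i < N → 0 < t i := by
    intro i
    induction i with
    | zero => intro _; rw [ht0]; exact hT
    | succ n ih =>
      intro hn
      have hn' : n < N := Nat.lt_of_succ_lt hn
      have hne : t (n+1) ≠ 0 := Nat.find_min hex hn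
      exact lt_of_le_of_ne (hmem n (ih hn')).1 (Ne.symm hne)
  have hIcc : ∀ i, i ≤ N → t i ∈ Icc (0:ℝ) T := by
    intro i hi
    cases i with
    | zero => rw [ht0]; exact ⟨hT.le, le_refl T⟩
    | succ n => exact hmem n (hposN n (Nat.lt_of_succ_le hi))
  have hle : ∀ i, i < N → t (i+1) ≤ t i := by
    intro i hi
    refine (hrec i (hposN i hi)).2 ⟨hIcc i hi.le, fun s hs => ?_⟩
    have h0s : (0:ℝ) ≤ s := le_trans (hIcc i hi.le).1 hs.1
    exact le_of_lt (lt_of_le_of_lt hs.1 (hφ s ⟨h0s, hs.2⟩))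
  refine ⟨N, htN, ?_⟩
  apply Subset.antisymm
  · intro x hx
    have hPN : t N ≤ x := by rw [htN]; exact hx.1
    have hj : ∃ j, t j ≤ x := ⟨N, hPN⟩
    set j := Nat.find hj with hjdef
    have hjN : j ≤ N := Nat.find_min' hj hPN
    have hjx : t j ≤ x := Nat.find_spec hj
    simp only [mem_iUnion, Finset.mem_range]
    cases hj' : j with
    | zero =>
      refine ⟨0, hN0, ?_, ?_⟩
      · have := hle 0 hN0
        rw [hj'] at hjx
        rw [ht0] at hjx
        have : x = T := le_antisymm hx.2 hjx
        rw [this, ← ht0]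
        exact hle 0 hN0
      · rw [ht0]; exact hx.2
    | succ k =>
      have hkN : k < N := by omega
      have hkx : x < t k := by
        have := Nat.find_min hj (show k < j by omega)
        push_neg at this
        exact this
      refine ⟨k, hkN, ?_, hkx.le⟩
      rw [hj'] at hjx
      exact hjx
  · intro x hx
    simp only [mem_iUnion, Finset.mem_range] at hx
    obtain ⟨i, hiN, hx1, hx2⟩ := hx
    exact ⟨le_trans (hIcc (i+1) (Nat.succ_le_of_lt hiN)).1 hx1,
      le_trans hx2 (hIcc i hiN.le).2⟩
end

section
/- Let φ : [0,T] → ℝ be continuous with φ(s) > s for all s ∈ [0,T], let 0 ≤ t_N and suppose t_N = min{t ∈ [0,T] : φ(s) ≥ t_{N-1} for all s ∈ [t,T]} satisfies φ(t_N) > t_N. If t_N > 0, then there exists t̃ ∈ [0, t_N) such that φ(s) ≥ t_N for all s ∈ [t̃, T]; consequently if t_N is the last term of the recursion (i.e., no further step decreases it), then t_N = 0. -/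
open Set

theorem last_partition_point_is_zero
    (T : ℝ) (hT : 0 < T) (φ : ℝ → ℝ)
    (hφc : ContinuousOn φ (Icc 0 T))
    (hφ : ∀ s ∈ Icc 0 T, s < φ s)
    (tN1 tN : ℝ)
    (hleast : IsLeast {x ∈ Icc 0 T | ∀ s ∈ Icc x T, tN1 ≤ φ s} tN)
    (hgt : tN < φ tN) :
    (0 < tN → ∃ t' ∈ Ico 0 tN, ∀ s ∈ Icc t' T, tN ≤ φ s) ∧
    (IsLeast {x ∈ Icc 0 T | ∀ s ∈ Icc x T, tN ≤ φ s} tN → tN = 0) := by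
  obtain ⟨⟨⟨htN0, htNT⟩, hmem⟩, hlb⟩ := hleast
  have key : 0 < tN → ∃ t' ∈ Ico 0 tN, ∀ s ∈ Icc t' T, tN ≤ φ s := by
    intro hpos
    have hcont := hφc tN ⟨htN0, htNT⟩
    have hev : ∀ᶠ s in nhdsWithin tN (Icc 0 T), tN < φ s :=
      hcont.eventually_const_lt hgt
    rw [Filter.eventually_iff, Metric.mem_nhdsWithin_iff] at hev
    obtain ⟨δ, hδ, hball⟩ := hev
    refine ⟨max 0 (tN - δ/2), ⟨le_max_left _ _, ?_⟩, ?_⟩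
    · exact max_lt hpos (by linarith)
    · intro s hs
      rcases lt_or_ge s tN with h | h
      · have hmem2 : s ∈ Icc 0 T := ⟨le_trans (le_max_left _ _) hs.1, hs.2⟩
        have hd : dist s tN < δ := by
          rw [Real.dist_eq, abs_lt]
          have := le_trans (le_max_right _ _) hs.1
          constructor <;> linarith
        exact (hball ⟨Metric.mem_ball.mpr hd, hmem2⟩).le
      · exact le_trans h (hφ s ⟨le_trans htN0 h, hs.2⟩).le
  refine ⟨key, ?_⟩
  intro hle
  by_contra hne
  have hpos : 0 < tN := lt_of_le_of_ne htN0 (Ne.symm hne)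
  obtain ⟨t', ⟨ht'0, ht'lt⟩, ht'⟩ := key hpos
  have := hle.2 ⟨⟨ht'0, le_trans ht'lt.le htNT⟩, ht'⟩
  linarith
end

section
/- Let δ, ζ : [0,T] → ℝ be continuous with δ, ζ > 0, and define t_0 = T, t_i = min{t ∈ [0,T] : min(s+δ(s), s+ζ(s)) ≥ t_{i-1} for all s ∈ [t,T]} for i ≥ 1 while t_{i-1} > 0. If for some i ≥ 1 one has t_i > 0, then min(t_i + δ(t_i), t_i + ζ(t_i)) = t_{i-1} and t_i < t_{i-1}. -/
open Set

theorem partition_step_equality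
    (T : ℝ) (hT : 0 < T) (δ ζ : ℝ → ℝ)
    (hδc : ContinuousOn δ (Icc 0 T)) (hζc : ContinuousOn ζ (Icc 0 T))
    (hδ : ∀ s ∈ Icc 0 T, 0 < δ s) (hζ : ∀ s ∈ Icc 0 T, 0 < ζ s)
    (a b : ℝ) (ha : 0 < a) (haT : a ≤ T)
    (hleast : IsLeast {x ∈ Icc 0 T | ∀ s ∈ Icc x T, a ≤ min (s + δ s) (s + ζ s)} b)
    (hb : 0 < b) :
    min (b + δ b) (b + ζ b) = a ∧ b < a := by
  obtain ⟨⟨hbT, hbS⟩, hlb⟩ := hleast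
  have hbmem : b ∈ Icc (0:ℝ) T := hbT
  have haub : a ≤ min (b + δ b) (b + ζ b) := hbS b ⟨le_refl b, hbT.2⟩
  have hfc : ContinuousOn (fun s => min (s + δ s) (s + ζ s)) (Icc 0 T) :=
    (continuousOn_id.add hδc).inf (continuousOn_id.add hζc)
  have heq : min (b + δ b) (b + ζ b) = a := by
    by_contra hne
    have hlt : a < min (b + δ b) (b + ζ b) := lt_of_le_of_ne haub (Ne.symm hne)
    have hcw : ContinuousWithinAt (fun s => min (s + δ s) (s + ζ s)) (Icc 0 T) b :=
      hfc b hbmem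
    have hev : ∀ᶠ s in nhdsWithin b (Icc 0 T),
        a < min (s + δ s) (s + ζ s) := hcw (Ioi_mem_nhds hlt)
    obtain ⟨ε, hε, hball⟩ := Metric.mem_nhdsWithin_iff.mp hev
    set x := max 0 (b - ε / 2) with hx
    have hxb : x < b := max_lt hb (by linarith)
    have hxmem : x ∈ Icc (0:ℝ) T :=
      ⟨le_max_left _ _, max_le (le_of_lt hT) (by linarith [hbT.2])⟩
    have hxS : ∀ s ∈ Icc x T, a ≤ min (s + δ s) (s + ζ s) := by
      intro s hs
      rcases le_or_gt b s with hbs | hsb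
      · exact hbS s ⟨hbs, hs.2⟩
      · have hsmem : s ∈ Icc (0:ℝ) T := ⟨le_trans (le_max_left _ _) hs.1, hs.2⟩
        have hdist : dist s b < ε := by
          rw [Real.dist_eq, abs_of_nonpos (by linarith)]
          have : b - ε / 2 ≤ x := le_max_right _ _
          linarith [hs.1]
        exact le_of_lt (hball ⟨Metric.mem_ball.mpr hdist, hsmem⟩)
    have := hlb ⟨hxmem, hxS⟩
    linarith
  refine ⟨heq, ?_⟩
  have h1 : 0 < δ b := hδ b hbmem
  have h2 : 0 < ζ b := hζ b hbmem
  have : b < min (b + δ b) (b + ζ b) := lt_min (by linarith) (by linarith)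
  linarith [this.trans_eq heq]
end
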